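/- Let (X,d,μ) be an unbounded metric measure space with 0 < μ(B) < ∞ for all balls, and fix a ∈ X. Define the measure μ_a on X by dμ_a(x) = dμ(x)/μ(B(a, 1+d(x,a)))^2. Then μ_a(X) ≤ 2/μ(B(a,1)); in particular μ_a is a finite measure. -/

import Mathlib

/-!
Cut `X` into the shells `B(a, j+1) \ B(a, j)`. On the `j`-th shell `1 + d(x, a) ≥ j + 1`, so the
density is at most `1 / b_{j+1}²` with `b_j = μ(B(a, j))`, and the shell has mass `b_{j+1} - b_j`.
The shell `j = 0` contributes at most `1 / b_1`, and for `j ≥ 1`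
`(b_{j+1} - b_j) / b_{j+1}² ≤ 1 / b_j - 1 / b_{j+1}`, which telescopes to at most `1 / b_1`.
-/

open MeasureTheory Metric Set ENNReal

namespace ENNReal

theorem add_sum_range_tsub_of_monotone {g : ℕ → ℝ≥0∞} (hg : Monotone g) (N : ℕ) :
    g 0 + ∑ j ∈ Finset.range N, (g (j + 1) - g j) = g N := by
  induction N with
  | zero => simp
  | succ N ih => rw [Finset.sum_range_succ, ← add_assoc, ih, add_tsub_cancel_of_le (hg N.le_succ)]

theorem tsum_tsub_succ_le_of_antitone {c : ℕ → ℝ≥0∞} (hc : Antitone c) :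
    ∑' j, (c j - c (j + 1)) ≤ c 0 := by
  have partial_sum : ∀ N, ∑ j ∈ Finset.range N, (c j - c (j + 1)) + c N = c 0 := by
    intro N
    induction N with
    | zero => simp
    | succ N ih =>
      rw [Finset.sum_range_succ, add_assoc, tsub_add_cancel_of_le (hc N.le_succ), ih]
  rw [ENNReal.tsum_eq_iSup_nat]
  exact iSup_le fun N => (partial_sum N).symm ▸ le_self_add

theorem inv_sq_mul_tsub_le_inv_tsub_inv {p q : ℝ≥0∞} (hp : p ≠ 0) (hq : q ≠ ⊤) (hpq : p ≤ q) :
    (q ^ 2)⁻¹ * (q - p) ≤ p⁻¹ - q⁻¹ := by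
  have hq0 : q ≠ 0 := (pos_of_ne_zero hp |>.trans_le hpq).ne'
  lift q to NNReal using hq
  lift p to NNReal using ne_top_of_le_ne_top coe_ne_top hpq
  simp only [ne_eq, coe_eq_zero] at hp hq0
  have hpq : p ≤ q := by exact_mod_cast hpq
  have hinv : q⁻¹ ≤ p⁻¹ := by gcongr
  rw [← coe_pow, ← coe_inv (pow_ne_zero _ hq0), ← coe_inv hp, ← coe_inv hq0, ← coe_sub, ← coe_sub,
    ← coe_mul, coe_le_coe, ← NNReal.coe_le_coe]
  push_cast [hpq, hinv]
  rw [inv_sub_inv (by positivity) (by positivity), inv_mul_eq_div, sq]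
  gcongr
  exact sub_nonneg.2 (by exact_mod_cast hpq)

theorem tsum_inv_sq_mul_tsub_le {b : ℕ → ℝ≥0∞} (hb : Monotone b) (hb0 : b 0 = 0) (hb1 : b 1 ≠ 0)
    (hb_top : ∀ j, b j ≠ ⊤) :
    ∑' j, (b (j + 1) ^ 2)⁻¹ * (b (j + 1) - b j) ≤ 2 / b 1 := by
  have first_shell : (b 1 ^ 2)⁻¹ * (b 1 - b 0) = (b 1)⁻¹ := by
    rw [hb0, tsub_zero, sq, ENNReal.mul_inv (.inl hb1) (.inl (hb_top 1)), mul_assoc,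
      ENNReal.inv_mul_cancel hb1 (hb_top 1), mul_one]
  have later_shells : ∑' j, (b (j + 1 + 1) ^ 2)⁻¹ * (b (j + 1 + 1) - b (j + 1)) ≤ (b 1)⁻¹ :=
    calc ∑' j, (b (j + 1 + 1) ^ 2)⁻¹ * (b (j + 1 + 1) - b (j + 1))
        ≤ ∑' j, ((b (j + 1))⁻¹ - (b (j + 1 + 1))⁻¹) :=
          ENNReal.tsum_le_tsum fun j => inv_sq_mul_tsub_le_inv_tsub_inv
            (ne_bot_of_le_ne_bot hb1 (hb (by omega))) (hb_top _) (hb (by omega))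
      _ ≤ (b 1)⁻¹ :=
          tsum_tsub_succ_le_of_antitone fun i j hij => ENNReal.inv_le_inv' (hb (by omega))
  rw [tsum_eq_zero_add' ENNReal.summable, first_shell, div_eq_mul_inv, two_mul]
  gcongr

end ENNReal

namespace MeasureTheory.Measure

variable {α : Type*} [MeasurableSpace α] {μ : Measure α} {s : ℕ → Set α} {j : ℕ}

/-- The part of `μ` carried by `s (j + 1) \ s j`, written as a difference of restrictions since
the sets `s j` need not be measurable. -/
noncomputable def restrictIncrement (μ : Measure α) (s : ℕ → Set α) (j : ℕ) : Measure α :=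
  μ.restrict (s (j + 1)) - μ.restrict (s j)

theorem restrictIncrement_apply (hsub : s j ⊆ s (j + 1)) (hfin : μ (s j) ≠ ∞) {t : Set α}
    (ht : MeasurableSet t) :
    restrictIncrement μ s j t = μ (t ∩ s (j + 1)) - μ (t ∩ s j) := by
  have : IsFiniteMeasure (μ.restrict (s j)) := isFiniteMeasure_restrict.2 hfin
  rw [restrictIncrement, sub_apply ht (restrict_mono hsub le_rfl), restrict_apply ht,
    restrict_apply ht]

theorem restrictIncrement_self (hsub : s j ⊆ s (j + 1)) (hfin : μ (s j) ≠ ∞) :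
    restrictIncrement μ s j (s j) = 0 := by
  set T := toMeasurable μ (s j)
  refine le_antisymm ?_ zero_le
  calc restrictIncrement μ s j (s j) ≤ restrictIncrement μ s j T :=
        measure_mono (subset_toMeasurable _ _)
    _ = μ (T ∩ s (j + 1)) - μ (T ∩ s j) :=
        restrictIncrement_apply hsub hfin (measurableSet_toMeasurable _ _)
    _ ≤ μ T - μ (s j) := by
        rw [inter_eq_self_of_subset_right (subset_toMeasurable _ _)]
        exact tsub_le_tsub_right (measure_mono inter_subset_left) _
    _ = 0 := by rw [measure_toMeasurable, tsub_self]

theorem sum_restrictIncrement (hs : Monotone s) (hs0 : s 0 = ∅) (hs_cover : ⋃ j, s j = univ)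
    (hfin : ∀ j, μ (s j) ≠ ∞) :
    sum (restrictIncrement μ s) = μ := by
  ext t ht
  have hts : Monotone fun j => t ∩ s j := fun i j hij => inter_subset_inter_right t (hs hij)
  rw [sum_apply _ ht, ENNReal.tsum_eq_iSup_nat]
  have partial_sums :=
    ENNReal.add_sum_range_tsub_of_monotone fun i j hij => measure_mono (μ := μ) (hts hij)
  simp only [hs0, inter_empty, measure_empty, zero_add] at partial_sums
  simp_rw [restrictIncrement_apply (hs (Nat.le_succ _)) (hfin _) ht, partial_sums]
  rw [← hts.measure_iUnion, ← inter_iUnion, hs_cover, inter_univ]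

theorem lintegral_le_tsum_mul_tsub (hs : Monotone s) (hs0 : s 0 = ∅) (hs_cover : ⋃ j, s j = univ)
    (hfin : ∀ j, μ (s j) ≠ ∞) {f : α → ℝ≥0∞} {c : ℕ → ℝ≥0∞} (hf : ∀ j, ∀ x ∉ s j, f x ≤ c j) :
    ∫⁻ x, f x ∂μ ≤ ∑' j, c j * (μ (s (j + 1)) - μ (s j)) := by
  calc ∫⁻ x, f x ∂μ = ∑' j, ∫⁻ x, f x ∂restrictIncrement μ s j := by
        rw [← lintegral_sum_measure, sum_restrictIncrement hs hs0 hs_cover hfin]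
    _ ≤ ∑' j, c j * (μ (s (j + 1)) - μ (s j)) := by
        refine ENNReal.tsum_le_tsum fun j => ?_
        have hsub := hs j.le_succ
        have off_self : ∀ᵐ x ∂restrictIncrement μ s j, x ∉ s j :=
          measure_eq_zero_iff_ae_notMem.1 (restrictIncrement_self hsub (hfin j))
        calc ∫⁻ x, f x ∂restrictIncrement μ s j ≤ ∫⁻ _, c j ∂restrictIncrement μ s j :=
              lintegral_mono_ae (off_self.mono (hf j))
          _ = c j * (μ (s (j + 1)) - μ (s j)) := by
              rw [lintegral_const, restrictIncrement_apply hsub (hfin j) MeasurableSet.univ,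
                univ_inter, univ_inter]

end MeasureTheory.Measure

theorem sphericalization_measure_finite {X : Type*} [MetricSpace X] [MeasurableSpace X]
    (μ : Measure X)
    (hball : ∀ (x : X) (r : ℝ), 0 < r → 0 < μ (Metric.ball x r) ∧ μ (Metric.ball x r) < ⊤)
    (a : X) :
    (μ.withDensity fun x => (μ (Metric.ball a (1 + dist x a)) ^ 2)⁻¹) Set.univ ≤
      2 / μ (Metric.ball a 1) := by
  set b : ℕ → ℝ≥0∞ := fun j => μ (ball a j)
  have hballs : Monotone fun j : ℕ => ball a j := fun i j hij =>
    ball_subset_ball (by exact_mod_cast hij)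
  have hb : Monotone b := fun i j hij => measure_mono (hballs hij)
  have hb_top : ∀ j, b j ≠ ⊤ := by
    rintro (_ | j)
    · simp [b]
    · exact (hball a _ (by positivity)).2.ne
  have density_le : ∀ j : ℕ, ∀ x ∉ ball a j,
      (μ (ball a (1 + dist x a)) ^ 2)⁻¹ ≤ (b (j + 1) ^ 2)⁻¹ := by
    intro j x hx
    rw [mem_ball, not_lt] at hx
    gcongr
    exact measure_mono (ball_subset_ball (by push_cast; linarith))
  calc (μ.withDensity fun x => (μ (ball a (1 + dist x a)) ^ 2)⁻¹) univ
      = ∫⁻ x, (μ (ball a (1 + dist x a)) ^ 2)⁻¹ ∂μ := by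
        rw [withDensity_apply _ MeasurableSet.univ, Measure.restrict_univ]
    _ ≤ ∑' j, (b (j + 1) ^ 2)⁻¹ * (b (j + 1) - b j) :=
        Measure.lintegral_le_tsum_mul_tsub hballs (by simp)
          (iUnion_ball_nat a) hb_top density_le
    _ ≤ 2 / μ (ball a 1) := by
        simpa [b] using ENNReal.tsum_inv_sq_mul_tsub_le hb (by simp [b])
          (by simpa [b] using (hball a 1 one_pos).1.ne') hb_top
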